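/- arXiv:2507.02617 — 2 statements merged into one kernel-verified Lean document; each statement's English description precedes it below -/
import Mathlib

section
/- Let (X, φ) be a flow on a compact metric space, a : X → ℝ continuous, S = max over invariant probability measures m of ∫ a dm. Suppose u : X → ℝ is continuous and for all v ∈ X and t₁ ≤ t₂ one has u(φ_{t₂} v) − u(φ_{t₁} v) ≥ ∫_{t₁}^{t₂} a(φ_s v) ds − (t₂ − t₁)·S (a weak supersolution). Then for every invariant probability measure m attaining the maximum (∫ a dm = S), the function c(v, t) = ∫_0^t a(φ_s v) ds − t·S − (u(φ_t v) − u(v)) vanishes on the support of m for all t ≥ 0. -/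
/-!
Integrating the weak-supersolution inequality over `[0, t]` shows that the defect
`c(·, t)` is a nonpositive continuous function. Its integral against an invariant
probability measure `m` is `t (∫ a dm - S)` by Fubini and invariance, hence zero when `m`
is maximizing. A nonpositive continuous function with zero integral vanishes at every point
all of whose neighbourhoods have positive measure.
-/

open MeasureTheory

/-- The defect `c(v, t)` of `u` as a solution of `u ∘ φ_t - u = ∫₀ᵗ a ∘ φ_s ds - t S`. -/
noncomputable def flowDefect {X : Type*} (φ : ℝ → X → X) (a u : X → ℝ) (S t : ℝ) (v : X) :
    ℝ :=
  (∫ s in (0:ℝ)..t, a (φ s v)) - t * S - (u (φ t v) - u v)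

theorem Continuous.apply_eq_zero_of_integral_eq_zero_of_nonneg {X : Type*} [TopologicalSpace X]
    [MeasurableSpace X] [OpensMeasurableSpace X] {μ : Measure X} {f : X → ℝ}
    (hf : Continuous f) (hf_nonneg : 0 ≤ f) (hf_int : Integrable f μ) (h : ∫ x, f x ∂μ = 0)
    {v : X} (hv : ∀ U : Set X, IsOpen U → v ∈ U → 0 < μ U) : f v = 0 := by
  have hae : f =ᵐ[μ] 0 := (integral_eq_zero_iff_of_nonneg hf_nonneg hf_int).mp h
  by_contra hne
  have hpos : 0 < μ (f ⁻¹' Set.Ioi 0) :=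
    hv _ (isOpen_Ioi.preimage hf) (lt_of_le_of_ne (hf_nonneg v) (Ne.symm hne))
  have hnull : μ (f ⁻¹' Set.Ioi 0) = 0 :=
    measure_mono_null (fun x hx => ne_of_gt hx) (ae_iff.mp hae)
  exact hpos.ne' hnull

theorem MeasureTheory.MeasurePreserving.integral_comp_of_aestronglyMeasurable {X Y E : Type*}
    [MeasurableSpace X] [MeasurableSpace Y] [NormedAddCommGroup E] [NormedSpace ℝ E]
    {μ : Measure X} {ν : Measure Y} {f : X → Y} (hf : MeasurePreserving f μ ν) {g : Y → E}
    (hg : AEStronglyMeasurable g ν) : ∫ x, g (f x) ∂μ = ∫ y, g y ∂ν := by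
  rw [← hf.map_eq] at hg
  rw [← integral_map hf.measurable.aemeasurable hg, hf.map_eq]

theorem integral_intervalIntegral_comp_flow {X : Type*} [MetricSpace X] [CompactSpace X]
    [MeasurableSpace X] [BorelSpace X] {φ : ℝ → X → X} {m : Measure X} [IsFiniteMeasure m]
    (hflow : Continuous fun p : ℝ × X => φ p.1 p.2) (hinv : ∀ t, MeasurePreserving (φ t) m m)
    {f : X → ℝ} (hf : Continuous f) (t : ℝ) :
    ∫ x, (∫ s in (0:ℝ)..t, f (φ s x)) ∂m = t * ∫ x, f x ∂m := by
  obtain ⟨C, hC⟩ := isCompact_univ.exists_bound_of_continuousOn hf.continuousOn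
  have : IsFiniteMeasure (volume.restrict (Set.uIoc 0 t)) := by
    rw [Set.uIoc]; infer_instance
  have hint : Integrable (Function.uncurry fun s x => f (φ s x))
      ((volume.restrict (Set.uIoc 0 t)).prod m) :=
    Integrable.mono' (integrable_const C) (hf.comp hflow).aestronglyMeasurable
      (.of_forall fun p => hC _ (Set.mem_univ _))
  rw [← intervalIntegral_integral_swap hint]
  simp only [(hinv _).integral_comp_of_aestronglyMeasurable hf.aestronglyMeasurable,
    intervalIntegral.integral_const, sub_zero, smul_eq_mul]

theorem continuous_flowDefect {X : Type*} [TopologicalSpace X] {φ : ℝ → X → X} {a u : X → ℝ}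
    (hflow : Continuous fun p : ℝ × X => φ p.1 p.2) (ha : Continuous a) (hu : Continuous u)
    (S t : ℝ) : Continuous (flowDefect φ a u S t) := by
  have hφt : Continuous (φ t) := hflow.comp (continuous_const.prodMk continuous_id)
  unfold flowDefect
  fun_prop

theorem flowDefect_nonpos {X : Type*} {φ : ℝ → X → X} {a u : X → ℝ} {S : ℝ}
    (hφ0 : ∀ x, φ 0 x = x)
    (hsuper : ∀ v : X, ∀ t₁ t₂ : ℝ, t₁ ≤ t₂ →
      u (φ t₂ v) - u (φ t₁ v) ≥ (∫ s in t₁..t₂, a (φ s v)) - (t₂ - t₁) * S)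
    {t : ℝ} (ht : 0 ≤ t) (v : X) : flowDefect φ a u S t v ≤ 0 := by
  have h := hsuper v 0 t ht
  rw [hφ0, sub_zero] at h
  unfold flowDefect
  linarith

theorem integral_flowDefect {X : Type*} [MetricSpace X] [CompactSpace X]
    [MeasurableSpace X] [BorelSpace X] {φ : ℝ → X → X} {a u : X → ℝ} {m : Measure X}
    [IsProbabilityMeasure m] (hflow : Continuous fun p : ℝ × X => φ p.1 p.2)
    (hinv : ∀ t, MeasurePreserving (φ t) m m) (ha : Continuous a) (hu : Continuous u) (S t : ℝ) :
    ∫ x, flowDefect φ a u S t x ∂m = t * ((∫ x, a x ∂m) - S) := by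
  have hint : ∀ {g : X → ℝ}, Continuous g → Integrable g m := fun hg =>
    hg.integrable_of_hasCompactSupport (.of_compactSpace _)
  have hφt : Continuous (φ t) := hflow.comp (continuous_const.prodMk continuous_id)
  unfold flowDefect
  rw [integral_sub, integral_sub, integral_sub, integral_intervalIntegral_comp_flow hflow hinv ha,
    (hinv t).integral_comp_of_aestronglyMeasurable hu.aestronglyMeasurable, integral_const]
  · simp only [probReal_univ, one_smul]
    ring
  all_goals exact hint (by fun_prop)

theorem stmt6_general {X : Type*} [MetricSpace X] [CompactSpace X]
    [MeasurableSpace X] [BorelSpace X]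
    (φ : ℝ → X → X) (hflow : Continuous fun p : ℝ × X => φ p.1 p.2)
    (hφ0 : ∀ x, φ 0 x = x)
    (a : X → ℝ) (ha : Continuous a)
    (S : ℝ)
    (u : X → ℝ) (hu : Continuous u)
    (hsuper : ∀ v : X, ∀ t₁ t₂ : ℝ, t₁ ≤ t₂ →
      u (φ t₂ v) - u (φ t₁ v) ≥ (∫ s in t₁..t₂, a (φ s v)) - (t₂ - t₁) * S)
    (m : Measure X) (hm : IsProbabilityMeasure m)
    (hminv : ∀ t, MeasurePreserving (φ t) m m)
    (hmax : (∫ x, a x ∂m) = S) :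
    ∀ v : X, (∀ U : Set X, IsOpen U → v ∈ U → 0 < m U) →
      ∀ t : ℝ, 0 ≤ t →
        (∫ s in (0:ℝ)..t, a (φ s v)) - t * S - (u (φ t v) - u v) = 0 := by
  intro v hv t ht
  have hc := continuous_flowDefect hflow ha hu S t
  have hc_int : ∫ x, -flowDefect φ a u S t x ∂m = 0 := by
    rw [integral_neg, integral_flowDefect hflow hminv ha hu S t, hmax, sub_self, mul_zero, neg_zero]
  have hc_zero : -flowDefect φ a u S t v = 0 :=
    hc.neg.apply_eq_zero_of_integral_eq_zero_of_nonneg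
      (fun x => neg_nonneg.mpr (flowDefect_nonpos hφ0 hsuper ht x))
      (hc.neg.integrable_of_hasCompactSupport (.of_compactSpace _)) hc_int hv
  exact neg_eq_zero.mp hc_zero

theorem stmt6 {X : Type*} [MetricSpace X] [CompactSpace X]
    [MeasurableSpace X] [BorelSpace X]
    (φ : ℝ → X → X) (hflow : Continuous fun p : ℝ × X => φ p.1 p.2)
    (hφ0 : ∀ x, φ 0 x = x) (hφadd : ∀ s t x, φ (s + t) x = φ s (φ t x))
    (a : X → ℝ) (ha : Continuous a)
    (S : ℝ)
    (hS : ∀ m : Measure X, IsProbabilityMeasure m →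
      (∀ t, MeasurePreserving (φ t) m m) → (∫ x, a x ∂m) ≤ S)
    (u : X → ℝ) (hu : Continuous u)
    (hsuper : ∀ v : X, ∀ t₁ t₂ : ℝ, t₁ ≤ t₂ →
      u (φ t₂ v) - u (φ t₁ v) ≥ (∫ s in t₁..t₂, a (φ s v)) - (t₂ - t₁) * S)
    (m : Measure X) (hm : IsProbabilityMeasure m)
    (hminv : ∀ t, MeasurePreserving (φ t) m m)
    (hmax : (∫ x, a x ∂m) = S) :
    ∀ v : X, (∀ U : Set X, IsOpen U → v ∈ U → 0 < m U) →
      ∀ t : ℝ, 0 ≤ t →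
        (∫ s in (0:ℝ)..t, a (φ s v)) - t * S - (u (φ t v) - u v) = 0 :=
  stmt6_general φ hflow hφ0 a ha S u hu hsuper m hm hminv hmax
end

section
/- Let X be a compact metric space with a continuous flow φ, and let c : X × ℝ_{≥0} → ℝ_{≤0} be a continuous nonpositive additive cocycle. Define H(v₀) = lim_{ε→0} limsup_{t→∞} sup { c(v, t) : d(v, v₀) < ε, d(φ_t v, v₀) < ε }. Then H(v₀) ≤ 0 for all v₀ ∈ X, and the set { v : H(v) = 0 } is closed in X. -/
theorem stmt8 {X : Type*} [MetricSpace X] [CompactSpace X]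
    (φ : ℝ → X → X) (hflow : Continuous fun p : ℝ × X => φ p.1 p.2)
    (hφ0 : ∀ x, φ 0 x = x) (hφadd : ∀ s t x, φ (s + t) x = φ s (φ t x))
    (c : X → ℝ → ℝ)
    (hc : ContinuousOn (fun p : X × ℝ => c p.1 p.2) (Set.univ ×ˢ Set.Ici 0))
    (hnonpos : ∀ v t, 0 ≤ t → c v t ≤ 0)
    (hzero : ∀ v, c v 0 = 0)
    (hcoc : ∀ v t₁ t₂, 0 ≤ t₁ → 0 ≤ t₂ →
      c v (t₁ + t₂) = c v t₁ + c (φ t₁ v) t₂) :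
    (∀ v₀ : X,
      (⨅ (ε : ℝ) (_ : 0 < ε), ⨅ (T : ℝ),
        ⨆ (v : X) (t : ℝ) (_ : 0 ≤ t) (_ : T ≤ t)
          (_ : dist v v₀ < ε) (_ : dist (φ t v) v₀ < ε),
            (c v t : EReal)) ≤ 0) ∧
    IsClosed {v₀ : X |
      (⨅ (ε : ℝ) (_ : 0 < ε), ⨅ (T : ℝ),
        ⨆ (v : X) (t : ℝ) (_ : 0 ≤ t) (_ : T ≤ t)
          (_ : dist v v₀ < ε) (_ : dist (φ t v) v₀ < ε),
            (c v t : EReal)) = 0} := by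
  set H : X → EReal := fun v₀ =>
    ⨅ (ε : ℝ) (_ : 0 < ε), ⨅ (T : ℝ),
      ⨆ (v : X) (t : ℝ) (_ : 0 ≤ t) (_ : T ≤ t)
        (_ : dist v v₀ < ε) (_ : dist (φ t v) v₀ < ε),
          (c v t : EReal) with hH
  have h1 : ∀ v₀, H v₀ ≤ 0 := by
    intro v₀
    refine le_trans (iInf_le _ 1) (le_trans (iInf_le _ one_pos)
      (le_trans (iInf_le _ 0) ?_))
    refine iSup_le fun v => iSup_le fun t => iSup_le fun ht =>
      iSup_le fun _ => iSup_le fun _ => iSup_le fun _ => ?_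
    exact_mod_cast hnonpos v t ht
  refine ⟨h1, ?_⟩
  rw [← closure_eq_iff_isClosed]
  refine subset_antisymm (fun v₀ hv₀ => ?_) subset_closure
  refine le_antisymm (h1 v₀) ?_
  refine le_iInf fun ε => le_iInf fun hε => le_iInf fun T => ?_
  obtain ⟨w, hwS, hw⟩ := Metric.mem_closure_iff.mp hv₀ (ε / 2) (half_pos hε)
  have hHw : H w = 0 := hwS
  have step1 : (0 : EReal) ≤
      ⨆ (v : X) (t : ℝ) (_ : 0 ≤ t) (_ : T ≤ t)
        (_ : dist v w < ε / 2) (_ : dist (φ t v) w < ε / 2),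
          (c v t : EReal) := by
    calc (0 : EReal) = H w := hHw.symm
    _ ≤ _ := le_trans (iInf_le _ (ε / 2)) (le_trans (iInf_le _ (half_pos hε))
        (iInf_le _ T))
  refine le_trans step1 ?_
  refine iSup_le fun v => iSup_le fun t => iSup_le fun ht => iSup_le fun hT =>
    iSup_le fun hd1 => iSup_le fun hd2 => ?_
  have e1 : dist v v₀ < ε := by
    calc dist v v₀ ≤ dist v w + dist w v₀ := dist_triangle _ _ _
    _ < ε / 2 + ε / 2 := by
        rw [dist_comm w v₀]; exact add_lt_add hd1 hw
    _ = ε := by ring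
  have e2 : dist (φ t v) v₀ < ε := by
    calc dist (φ t v) v₀ ≤ dist (φ t v) w + dist w v₀ := dist_triangle _ _ _
    _ < ε / 2 + ε / 2 := by
        rw [dist_comm w v₀]; exact add_lt_add hd2 hw
    _ = ε := by ring
  exact le_iSup_of_le v (le_iSup_of_le t (le_iSup_of_le ht (le_iSup_of_le hT
    (le_iSup_of_le e1 (le_iSup_of_le e2 le_rfl)))))
end
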